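/- The rewrite relation ⇝s (semi-saturation) is terminating on finite sets of labelled sequents: there is no infinite sequence S0 ⇝s S1 ⇝s S2 ⇝s ⋯ starting from a finite set S0. -/

import Mathlib

/-- Formulas of intuitionistic modal logic, built from atomic propositions
`a ∈ ℕ` by `A ::= ⊥ | a | (A∧A) | (A∨A) | (A⊃A) | □A | ◇A`. -/
inductive Formula : Type
  | bot  : Formula
  | atom : ℕ → Formula
  | and  : Formula → Formula → Formula
  | or   : Formula → Formula → Formula
  | imp  : Formula → Formula → Formula
  | box  : Formula → Formula
  | dia  : Formula → Formula
  deriving DecidableEq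
/-- A labelled sequent `G = (R, Γ ⟹ Δ)`: relational atoms `x ≤ y` (`le`) and
`x R y` (`rel`) over labels (natural numbers) together with the labelled formulas
occurring on the left (`Γ`) and on the right (`Δ`) of the sequent arrow. -/
structure LSeq : Type where
  le : Set (ℕ × ℕ)
  rel : Set (ℕ × ℕ)
  left : Set (ℕ × Formula)
  right : Set (ℕ × Formula)
namespace LSeq

/-- `x ≤_G y`. -/
def Le (G : LSeq) (x y : ℕ) : Prop := (x, y) ∈ G.le
/-- `x R_G y`. -/
def Rel (G : LSeq) (x y : ℕ) : Prop := (x, y) ∈ G.rel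
/-- `x:A•`, i.e. `x:A` occurs on the left of `G`. -/
def Black (G : LSeq) (x : ℕ) (A : Formula) : Prop := (x, A) ∈ G.left
/-- `x:A∘`, i.e. `x:A` occurs on the right of `G`. -/
def White (G : LSeq) (x : ℕ) (A : Formula) : Prop := (x, A) ∈ G.right

/-- The set of labels occurring in `G`. -/
def labels (G : LSeq) : Set ℕ :=
  {x | (∃ y, G.Le x y ∨ G.Le y x ∨ G.Rel x y ∨ G.Rel y x) ∨ ∃ A, G.Black x A ∨ G.White x A}

/-- `G` is a finite labelled sequent. -/
def FiniteSeq (G : LSeq) : Prop :=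
  G.le.Finite ∧ G.rel.Finite ∧ G.left.Finite ∧ G.right.Finite

/-- Add labelled formulas to the left of a sequent. -/
def addLeft (G : LSeq) (s : Set (ℕ × Formula)) : LSeq := { G with left := G.left ∪ s }
/-- Add labelled formulas to the right of a sequent. -/
def addRight (G : LSeq) (s : Set (ℕ × Formula)) : LSeq := { G with right := G.right ∪ s }

/-- Happiness for a left (`•`) occurrence of a formula at label `x` in `G` (Def. 5.3). -/
def BlackHappy (G : LSeq) (x : ℕ) : Formula → Prop
  | Formula.bot => False
  | Formula.atom _ => True
  | Formula.and A B => G.Black x A ∧ G.Black x B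
  | Formula.or A B => G.Black x A ∨ G.Black x B
  | Formula.imp A B => G.White x A ∨ G.Black x B
  | Formula.box A => ∀ z, G.Rel x z → G.Black z A ∧ G.Black z (Formula.box A)
  | Formula.dia A => ∃ y, G.Rel x y ∧ G.Black y A

/-- Happiness for a right (`∘`) occurrence of a formula at label `x` in `G` (Def. 5.3). -/
def WhiteHappy (G : LSeq) (x : ℕ) : Formula → Prop
  | Formula.bot => True
  | Formula.atom a => ¬ G.Black x (Formula.atom a)
  | Formula.and A B => G.White x A ∨ G.White x B
  | Formula.or A B => G.White x A ∧ G.White x B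
  | Formula.imp A B => ∃ y, G.Le x y ∧ G.Black y A ∧ G.White y B
  | Formula.box A => ∃ y z, G.Le x y ∧ G.Rel y z ∧ G.White z A
  | Formula.dia A => ∀ y, G.Rel x y → G.White y A ∧ G.White y (Formula.dia A)

/-- A label is happy iff all formulas occurring at it are happy. -/
def HappyLabel (G : LSeq) (x : ℕ) : Prop :=
  (∀ A, G.Black x A → G.BlackHappy x A) ∧ (∀ A, G.White x A → G.WhiteHappy x A)

/-- The left exceptions for almost happy labels: formulas of the shape `⊥•`. -/
def AlmostExceptB : Formula → Prop
  | Formula.bot => True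
  | _ => False

/-- The left exceptions for naively happy labels: shapes `⊥•` and `(◇A)•`. -/
def NaiveExceptB : Formula → Prop
  | Formula.bot => True
  | Formula.dia _ => True
  | _ => False

/-- The right exceptions for almost/naively happy labels:
shapes `a∘`, `(A⊃B)∘` and `(□A)∘`. -/
def ExceptW : Formula → Prop
  | Formula.atom _ => True
  | Formula.imp _ _ => True
  | Formula.box _ => True
  | _ => False

/-- A label is almost happy iff all formulas occurring at it are happy,
except possibly those of the shapes `⊥•`, `a∘`, `(A⊃B)∘`, `(□A)∘`. -/
def AlmostHappyLabel (G : LSeq) (x : ℕ) : Prop :=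
  (∀ A, G.Black x A → ¬ AlmostExceptB A → G.BlackHappy x A) ∧
  (∀ A, G.White x A → ¬ ExceptW A → G.WhiteHappy x A)

/-- A label is naively happy iff all formulas occurring at it are happy,
except possibly those of the shapes `⊥•`, `(◇A)•`, `a∘`, `(A⊃B)∘`, `(□A)∘`. -/
def NaivelyHappyLabel (G : LSeq) (x : ℕ) : Prop :=
  (∀ A, G.Black x A → ¬ NaiveExceptB A → G.BlackHappy x A) ∧
  (∀ A, G.White x A → ¬ ExceptW A → G.WhiteHappy x A)

/-- `G` is structurally saturated (Def. 5.5): closure under monotonicity (monL),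
the frame conditions (F1) and (F2), and transitivity and reflexivity (on the
labels of `G`) of both `≤_G` and `R_G`. -/
def StructSat (G : LSeq) : Prop :=
  (∀ x y A, G.Le x y → G.Black x A → G.Black y A) ∧
  (∀ x y z, G.Rel x y → G.Le y z → ∃ u, G.Le x u ∧ G.Rel u z) ∧
  (∀ x y z, G.Rel x y → G.Le x z → ∃ u, G.Le y u ∧ G.Rel z u) ∧
  (∀ x y z, G.Le x y → G.Le y z → G.Le x z) ∧
  (∀ x ∈ G.labels, G.Le x x) ∧
  (∀ x y z, G.Rel x y → G.Rel y z → G.Rel x z) ∧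
  (∀ x ∈ G.labels, G.Rel x x)

/-- `G` is happy iff it is structurally saturated and all its labels are happy. -/
def Happy (G : LSeq) : Prop := G.StructSat ∧ ∀ x ∈ G.labels, G.HappyLabel x

/-- `G` is axiomatic iff some label carries `x:a•` and `x:a∘`, or carries `x:⊥•`. -/
def Axiomatic (G : LSeq) : Prop :=
  ∃ x, (∃ a, G.Black x (Formula.atom a) ∧ G.White x (Formula.atom a)) ∨
       G.Black x Formula.bot

/-- The reflexive-transitive closure of `R_G ∪ R_G⁻¹`:
its equivalence classes are the layers of `G`. -/
def LayerRel (G : LSeq) : ℕ → ℕ → Prop :=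
  Relation.ReflTransGen (fun x y => G.Rel x y ∨ G.Rel y x)

/-- The layer of a label. -/
def layerOf (G : LSeq) (x : ℕ) : Set ℕ := {y | G.LayerRel x y}

/-- `L` is a layer of `G`: an equivalence class of `LayerRel`. -/
def IsLayer (G : LSeq) (L : Set ℕ) : Prop := ∃ x ∈ G.labels, L = G.layerOf x

/-- `G` is layered (Def. 6.2). -/
def Layered (G : LSeq) : Prop :=
  (∀ x y, G.Rel x y → x ≠ y → ¬ G.Le x y ∧ ¬ G.Le y x) ∧
  (∀ x x' y y', G.Rel x y → G.Rel x' y' → G.Le x x' → x ≠ x' → ¬ G.Le y' y)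

/-- The order on layers: `L1 ≤ L2` iff `x ≤_G y` for some `x ∈ L1`, `y ∈ L2`. -/
def LayerLE (G : LSeq) (L1 L2 : Set ℕ) : Prop := ∃ x ∈ L1, ∃ y ∈ L2, G.Le x y

/-- Strict order on layers. -/
def LayerLT (G : LSeq) (L1 L2 : Set ℕ) : Prop := G.LayerLE L1 L2 ∧ L1 ≠ L2

/-- `G` is tree-layered: it is layered, there is a ≤-least layer, and any two
layers below a common layer are ≤-comparable. -/
def TreeLayered (G : LSeq) : Prop :=
  G.Layered ∧
  (∃ L0, G.IsLayer L0 ∧ ∀ L, G.IsLayer L → G.LayerLE L0 L) ∧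
  (∀ L L' L'', G.IsLayer L → G.IsLayer L' → G.IsLayer L'' →
    G.LayerLE L' L → G.LayerLE L'' L → G.LayerLE L' L'' ∨ G.LayerLE L'' L')

/-- `L` is a topmost (≤-maximal) layer of `G`. -/
def Topmost (G : LSeq) (L : Set ℕ) : Prop :=
  G.IsLayer L ∧ ∀ L', G.IsLayer L' → G.LayerLE L L' → L' = L

/-- The cluster of a label: its equivalence class under `R_G ∩ R_G⁻¹`. -/
def clusterOf (G : LSeq) (x : ℕ) : Set ℕ := {y | G.Rel x y ∧ G.Rel y x}

/-- `C` is a cluster of `G`. -/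
def IsCluster (G : LSeq) (C : Set ℕ) : Prop := ∃ x ∈ G.labels, C = G.clusterOf x

/-- The relation `R_G` on clusters: `C1 R_G C2` iff `x R_G y`
for some `x ∈ C1`, `y ∈ C2`. -/
def ClRel (G : LSeq) (C1 C2 : Set ℕ) : Prop := ∃ x ∈ C1, ∃ y ∈ C2, G.Rel x y

/-- The relation `≤_G` on clusters: `C1 ≤_G C2` iff every `y ∈ C2` has some
`x ∈ C1` with `x ≤_G y`. -/
def ClLe (G : LSeq) (C1 C2 : Set ℕ) : Prop := ∀ y ∈ C2, ∃ x ∈ C1, G.Le x y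

/-- `G` is tree-clustered: it is structurally saturated, some cluster is
`R_G`-below every cluster, and any two clusters below a common cluster are
`R_G`-comparable. -/
def TreeClustered (G : LSeq) : Prop :=
  G.StructSat ∧
  (∀ C' C'', G.IsCluster C' → G.IsCluster C'' →
    ∃ C, G.IsCluster C ∧ G.ClRel C C' ∧ G.ClRel C C'') ∧
  (∀ C C' C'', G.IsCluster C → G.IsCluster C' → G.IsCluster C'' →
    G.ClRel C' C → G.ClRel C'' C → G.ClRel C' C'' ∨ G.ClRel C'' C')

/-- `G` is stable: tree-layered, tree-clustered, and all inner (non-topmost)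
layers are happy. -/
def Stable (G : LSeq) : Prop :=
  G.TreeLayered ∧ G.TreeClustered ∧
  ∀ L, G.IsLayer L → ¬ G.Topmost L → ∀ x ∈ L, G.HappyLabel x

/-- `G` is semi-saturated: stable with all topmost layers naively happy. -/
def SemiSaturated (G : LSeq) : Prop :=
  G.Stable ∧ ∀ L, G.Topmost L → ∀ x ∈ L, G.NaivelyHappyLabel x

/-- `G` is saturated: stable with all topmost layers almost happy. -/
def Saturated (G : LSeq) : Prop :=
  G.Stable ∧ ∀ L, G.Topmost L → ∀ x ∈ L, G.AlmostHappyLabel x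

/-- Labels `x` (in `G`) and `y` (in `H`) are equivalent (`x ∼ y`) iff they carry
exactly the same left formulas and the same right formulas. -/
def LabEquiv (G : LSeq) (x : ℕ) (H : LSeq) (y : ℕ) : Prop :=
  (∀ A, G.Black x A ↔ H.Black y A) ∧ (∀ A, G.White x A ↔ H.White y A)

/-- A label has no past iff `y ≤_G x` implies `y = x`. -/
def NoPast (G : LSeq) (x : ℕ) : Prop := ∀ y, G.Le y x → y = x

end LSeq

/-- A stable set of sequents: finite with all elements stable. -/
def StableSet (S : Set LSeq) : Prop := S.Finite ∧ ∀ G ∈ S, G.Stable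
/-- A semi-saturated set of sequents: finite with all elements semi-saturated. -/
def SemiSaturatedSet (S : Set LSeq) : Prop := S.Finite ∧ ∀ G ∈ S, G.SemiSaturated
/-- A saturated set of sequents: finite with all elements saturated. -/
def SaturatedSet (S : Set LSeq) : Prop := S.Finite ∧ ∀ G ∈ S, G.Saturated
/-- One semi-saturation step on a single sequent (Def. 7.1): `SStepG G T` holds
iff `G` contains an unhappy formula of one of the seven listed shapes and `T` is
the set of sequents (one or two) replacing `G`. -/
inductive SStepG : LSeq → Set LSeq → Prop
  | andL {G : LSeq} {x : ℕ} {A B : Formula} :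
      G.Black x (Formula.and A B) → ¬ G.BlackHappy x (Formula.and A B) →
      SStepG G {G.addLeft {(x, A), (x, B)}}
  | orR {G : LSeq} {x : ℕ} {A B : Formula} :
      G.White x (Formula.or A B) → ¬ G.WhiteHappy x (Formula.or A B) →
      SStepG G {G.addRight {(x, A), (x, B)}}
  | boxL {G : LSeq} {x : ℕ} {A : Formula} :
      G.Black x (Formula.box A) → ¬ G.BlackHappy x (Formula.box A) →
      SStepG G {G.addLeft {q | G.Rel x q.1 ∧ (q.2 = A ∨ q.2 = Formula.box A)}}
  | diaR {G : LSeq} {x : ℕ} {A : Formula} :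
      G.White x (Formula.dia A) → ¬ G.WhiteHappy x (Formula.dia A) →
      SStepG G {G.addRight {q | G.Rel x q.1 ∧ (q.2 = A ∨ q.2 = Formula.dia A)}}
  | orL {G : LSeq} {x : ℕ} {A B : Formula} :
      G.Black x (Formula.or A B) → ¬ G.BlackHappy x (Formula.or A B) →
      SStepG G {G.addLeft {(x, A)}, G.addLeft {(x, B)}}
  | andR {G : LSeq} {x : ℕ} {A B : Formula} :
      G.White x (Formula.and A B) → ¬ G.WhiteHappy x (Formula.and A B) →
      SStepG G {G.addRight {(x, A)}, G.addRight {(x, B)}}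
  | impL {G : LSeq} {x : ℕ} {A B : Formula} :
      G.Black x (Formula.imp A B) → ¬ G.BlackHappy x (Formula.imp A B) →
      SStepG G {G.addRight {(x, A)}, G.addLeft {(x, B)}}

/-- The semi-saturation rewrite relation `⇝s` on sets of sequents (Def. 7.1). -/
def SStep (S S' : Set LSeq) : Prop :=
  ∃ G ∈ S, ∃ T, SStepG G T ∧ S' = (S \ {G}) ∪ T

/-- `S'` is a semi-saturation of `T`: reachable from `T` by `⇝s` steps and
in normal form w.r.t. `⇝s`. -/
def SemiSaturationOf (T S' : Set LSeq) : Prop :=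
  Relation.ReflTransGen SStep T S' ∧ ∀ S'', ¬ SStep S' S''


namespace SStepAux

open LSeq

/-- Subformula closure of a formula (as a finset). -/
def subf : Formula → Finset Formula
  | .bot => {.bot}
  | .atom a => {.atom a}
  | .and A B => insert (.and A B) (subf A ∪ subf B)
  | .or A B => insert (.or A B) (subf A ∪ subf B)
  | .imp A B => insert (.imp A B) (subf A ∪ subf B)
  | .box A => insert (.box A) (subf A)
  | .dia A => insert (.dia A) (subf A)

lemma mem_subf_self (A : Formula) : A ∈ subf A := by
  cases A <;> simp [subf]

lemma subf_trans : ∀ A C, C ∈ subf A → subf C ⊆ subf A := by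
  intro A
  induction A with
  | bot => intro C hC; simp [subf] at hC; subst hC; exact Finset.Subset.refl _
  | atom a => intro C hC; simp [subf] at hC; subst hC; exact Finset.Subset.refl _
  | and A B ihA ihB =>
      intro C hC
      simp only [subf, Finset.mem_insert, Finset.mem_union] at hC
      rcases hC with rfl | h | h
      · exact Finset.Subset.refl _
      · exact (ihA C h).trans (by intro x hx; simp only [subf, Finset.mem_insert, Finset.mem_union]; tauto)
      · exact (ihB C h).trans (by intro x hx; simp only [subf, Finset.mem_insert, Finset.mem_union]; tauto)
  | or A B ihA ihB =>
      intro C hC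
      simp only [subf, Finset.mem_insert, Finset.mem_union] at hC
      rcases hC with rfl | h | h
      · exact Finset.Subset.refl _
      · exact (ihA C h).trans (by intro x hx; simp only [subf, Finset.mem_insert, Finset.mem_union]; tauto)
      · exact (ihB C h).trans (by intro x hx; simp only [subf, Finset.mem_insert, Finset.mem_union]; tauto)
  | imp A B ihA ihB =>
      intro C hC
      simp only [subf, Finset.mem_insert, Finset.mem_union] at hC
      rcases hC with rfl | h | h
      · exact Finset.Subset.refl _
      · exact (ihA C h).trans (by intro x hx; simp only [subf, Finset.mem_insert, Finset.mem_union]; tauto)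
      · exact (ihB C h).trans (by intro x hx; simp only [subf, Finset.mem_insert, Finset.mem_union]; tauto)
  | box A ihA =>
      intro C hC
      simp only [subf, Finset.mem_insert] at hC
      rcases hC with rfl | h
      · exact Finset.Subset.refl _
      · exact (ihA C h).trans (Finset.subset_insert _ _)
  | dia A ihA =>
      intro C hC
      simp only [subf, Finset.mem_insert] at hC
      rcases hC with rfl | h
      · exact Finset.Subset.refl _
      · exact (ihA C h).trans (Finset.subset_insert _ _)

lemma sub_pair {α : Type*} (X : α) : ({X} : Set α) ⊆ {X, X} := fun _ hH => Or.inl hH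

/-- The invariant: relational atoms stay inside `Labs`, labelled formulas inside
`Labs ×ˢ F`. -/
def Inv (Labs : Set ℕ) (F : Set Formula) (G : LSeq) : Prop :=
  G.rel ⊆ Labs ×ˢ Labs ∧ G.left ⊆ Labs ×ˢ F ∧ G.right ⊆ Labs ×ˢ F

/-- The deficit measure of a sequent relative to the universe `U`. -/
noncomputable def mes (U : Set (ℕ × Formula)) (G : LSeq) : ℕ :=
  2 * U.ncard - (G.left.ncard + G.right.ncard)

lemma mes_lt_left {U s : Set (ℕ × Formula)} {G : LSeq} (hU : U.Finite)
    (hl : G.left ⊆ U) (hr : G.right ⊆ U) (hs : s ⊆ U) {p} (hp : p ∈ s)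
    (hpl : p ∉ G.left) : mes U (G.addLeft s) < mes U G := by
  have h1 : G.left.ncard < (G.left ∪ s).ncard :=
    Set.ncard_lt_ncard
      ⟨Set.subset_union_left, fun h => hpl (h (Set.mem_union_right _ hp))⟩
      (hU.subset (Set.union_subset hl hs))
  have h2 : (G.left ∪ s).ncard ≤ U.ncard :=
    Set.ncard_le_ncard (Set.union_subset hl hs) hU
  have h3 : G.right.ncard ≤ U.ncard := Set.ncard_le_ncard hr hU
  simp only [mes, LSeq.addLeft]
  omega

lemma mes_lt_right {U s : Set (ℕ × Formula)} {G : LSeq} (hU : U.Finite)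
    (hl : G.left ⊆ U) (hr : G.right ⊆ U) (hs : s ⊆ U) {p} (hp : p ∈ s)
    (hpl : p ∉ G.right) : mes U (G.addRight s) < mes U G := by
  have h1 : G.right.ncard < (G.right ∪ s).ncard :=
    Set.ncard_lt_ncard
      ⟨Set.subset_union_left, fun h => hpl (h (Set.mem_union_right _ hp))⟩
      (hU.subset (Set.union_subset hr hs))
  have h2 : (G.right ∪ s).ncard ≤ U.ncard :=
    Set.ncard_le_ncard (Set.union_subset hr hs) hU
  have h3 : G.left.ncard ≤ U.ncard := Set.ncard_le_ncard hl hU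
  simp only [mes, LSeq.addRight]
  omega

lemma inv_addLeft {Labs : Set ℕ} {F : Set Formula} {G : LSeq} {s}
    (hG : Inv Labs F G) (hs : s ⊆ Labs ×ˢ F) : Inv Labs F (G.addLeft s) :=
  ⟨hG.1, Set.union_subset hG.2.1 hs, hG.2.2⟩

lemma inv_addRight {Labs : Set ℕ} {F : Set Formula} {G : LSeq} {s}
    (hG : Inv Labs F G) (hs : s ⊆ Labs ×ˢ F) : Inv Labs F (G.addRight s) :=
  ⟨hG.1, hG.2.1, Set.union_subset hG.2.2 hs⟩

lemma key {Labs : Set ℕ} {F : Set Formula} (hU : (Labs ×ˢ F).Finite)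
    (hcl : ∀ C ∈ F, ∀ C' ∈ subf C, C' ∈ F)
    {G : LSeq} {T : Set LSeq} (h : SStepG G T) (hG : Inv Labs F G) :
    T.Nonempty ∧ (∃ H1 H2 : LSeq, T ⊆ {H1, H2}) ∧
      ∀ H ∈ T, Inv Labs F H ∧ mes (Labs ×ˢ F) H < mes (Labs ×ˢ F) G := by
  obtain ⟨hrel, hl, hr⟩ := hG
  cases h with
  | @andL x A B hb hu =>
      simp only [LSeq.BlackHappy] at hu
      have hx : (x, A.and B) ∈ Labs ×ˢ F := hl hb
      have hA : A ∈ F := hcl _ hx.2 A (by simp [subf, mem_subf_self])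
      have hB : B ∈ F := hcl _ hx.2 B (by simp [subf, mem_subf_self])
      have hs : ({(x,A),(x,B)} : Set (ℕ × Formula)) ⊆ Labs ×ˢ F := by
        rintro p (rfl | rfl)
        · exact ⟨hx.1, hA⟩
        · exact ⟨hx.1, hB⟩
      have hex : ∃ p ∈ ({(x,A),(x,B)} : Set (ℕ × Formula)), p ∉ G.left := by
        by_cases hA' : G.Black x A
        · exact ⟨(x,B), by simp, fun hB' => hu ⟨hA', hB'⟩⟩
        · exact ⟨(x,A), by simp, hA'⟩
      obtain ⟨p, hp, hpl⟩ := hex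
      refine ⟨⟨_, rfl⟩, ⟨_, _, sub_pair _⟩, ?_⟩
      rintro H rfl
      exact ⟨inv_addLeft ⟨hrel, hl, hr⟩ hs, mes_lt_left hU hl hr hs hp hpl⟩
  | @orR x A B hb hu =>
      simp only [LSeq.WhiteHappy] at hu
      have hx : (x, A.or B) ∈ Labs ×ˢ F := hr hb
      have hA : A ∈ F := hcl _ hx.2 A (by simp [subf, mem_subf_self])
      have hB : B ∈ F := hcl _ hx.2 B (by simp [subf, mem_subf_self])
      have hs : ({(x,A),(x,B)} : Set (ℕ × Formula)) ⊆ Labs ×ˢ F := by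
        rintro p (rfl | rfl)
        · exact ⟨hx.1, hA⟩
        · exact ⟨hx.1, hB⟩
      have hex : ∃ p ∈ ({(x,A),(x,B)} : Set (ℕ × Formula)), p ∉ G.right := by
        by_cases hA' : G.White x A
        · exact ⟨(x,B), by simp, fun hB' => hu ⟨hA', hB'⟩⟩
        · exact ⟨(x,A), by simp, hA'⟩
      obtain ⟨p, hp, hpl⟩ := hex
      refine ⟨⟨_, rfl⟩, ⟨_, _, sub_pair _⟩, ?_⟩
      rintro H rfl
      exact ⟨inv_addRight ⟨hrel, hl, hr⟩ hs, mes_lt_right hU hl hr hs hp hpl⟩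
  | @boxL x A hb hu =>
      simp only [LSeq.BlackHappy] at hu
      push_neg at hu
      obtain ⟨z, hz, hno⟩ := hu
      have hx : (x, A.box) ∈ Labs ×ˢ F := hl hb
      have hA : A ∈ F := hcl _ hx.2 A (by simp [subf, mem_subf_self])
      have hs : {q : ℕ × Formula | G.Rel x q.1 ∧ (q.2 = A ∨ q.2 = Formula.box A)} ⊆ Labs ×ˢ F := by
        rintro ⟨a, b⟩ ⟨hra, hor⟩
        refine ⟨(hrel hra).2, ?_⟩
        rcases hor with rfl | rfl
        · exact hA
        · exact hx.2
      have hex : ∃ p ∈ {q : ℕ × Formula | G.Rel x q.1 ∧ (q.2 = A ∨ q.2 = Formula.box A)},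
          p ∉ G.left := by
        by_cases hA' : G.Black z A
        · exact ⟨(z, Formula.box A), ⟨hz, Or.inr rfl⟩, hno hA'⟩
        · exact ⟨(z, A), ⟨hz, Or.inl rfl⟩, hA'⟩
      obtain ⟨p, hp, hpl⟩ := hex
      refine ⟨⟨_, rfl⟩, ⟨_, _, sub_pair _⟩, ?_⟩
      rintro H rfl
      exact ⟨inv_addLeft ⟨hrel, hl, hr⟩ hs, mes_lt_left hU hl hr hs hp hpl⟩
  | @diaR x A hb hu =>
      simp only [LSeq.WhiteHappy] at hu
      push_neg at hu
      obtain ⟨z, hz, hno⟩ := hu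
      have hx : (x, A.dia) ∈ Labs ×ˢ F := hr hb
      have hA : A ∈ F := hcl _ hx.2 A (by simp [subf, mem_subf_self])
      have hs : {q : ℕ × Formula | G.Rel x q.1 ∧ (q.2 = A ∨ q.2 = Formula.dia A)} ⊆ Labs ×ˢ F := by
        rintro ⟨a, b⟩ ⟨hra, hor⟩
        refine ⟨(hrel hra).2, ?_⟩
        rcases hor with rfl | rfl
        · exact hA
        · exact hx.2
      have hex : ∃ p ∈ {q : ℕ × Formula | G.Rel x q.1 ∧ (q.2 = A ∨ q.2 = Formula.dia A)},
          p ∉ G.right := by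
        by_cases hA' : G.White z A
        · exact ⟨(z, Formula.dia A), ⟨hz, Or.inr rfl⟩, hno hA'⟩
        · exact ⟨(z, A), ⟨hz, Or.inl rfl⟩, hA'⟩
      obtain ⟨p, hp, hpl⟩ := hex
      refine ⟨⟨_, rfl⟩, ⟨_, _, sub_pair _⟩, ?_⟩
      rintro H rfl
      exact ⟨inv_addRight ⟨hrel, hl, hr⟩ hs, mes_lt_right hU hl hr hs hp hpl⟩
  | @orL x A B hb hu =>
      simp only [LSeq.BlackHappy] at hu
      push_neg at hu
      have hx : (x, A.or B) ∈ Labs ×ˢ F := hl hb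
      have hA : A ∈ F := hcl _ hx.2 A (by simp [subf, mem_subf_self])
      have hB : B ∈ F := hcl _ hx.2 B (by simp [subf, mem_subf_self])
      have hsA : ({(x,A)} : Set (ℕ × Formula)) ⊆ Labs ×ˢ F := by
        rintro p rfl; exact ⟨hx.1, hA⟩
      have hsB : ({(x,B)} : Set (ℕ × Formula)) ⊆ Labs ×ˢ F := by
        rintro p rfl; exact ⟨hx.1, hB⟩
      refine ⟨⟨_, Or.inl rfl⟩, ⟨_, _, Set.Subset.refl _⟩, ?_⟩
      rintro H (rfl | rfl)
      · exact ⟨inv_addLeft ⟨hrel, hl, hr⟩ hsA,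
          mes_lt_left hU hl hr hsA rfl hu.1⟩
      · exact ⟨inv_addLeft ⟨hrel, hl, hr⟩ hsB,
          mes_lt_left hU hl hr hsB rfl hu.2⟩
  | @andR x A B hb hu =>
      simp only [LSeq.WhiteHappy] at hu
      push_neg at hu
      have hx : (x, A.and B) ∈ Labs ×ˢ F := hr hb
      have hA : A ∈ F := hcl _ hx.2 A (by simp [subf, mem_subf_self])
      have hB : B ∈ F := hcl _ hx.2 B (by simp [subf, mem_subf_self])
      have hsA : ({(x,A)} : Set (ℕ × Formula)) ⊆ Labs ×ˢ F := by
        rintro p rfl; exact ⟨hx.1, hA⟩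
      have hsB : ({(x,B)} : Set (ℕ × Formula)) ⊆ Labs ×ˢ F := by
        rintro p rfl; exact ⟨hx.1, hB⟩
      refine ⟨⟨_, Or.inl rfl⟩, ⟨_, _, Set.Subset.refl _⟩, ?_⟩
      rintro H (rfl | rfl)
      · exact ⟨inv_addRight ⟨hrel, hl, hr⟩ hsA,
          mes_lt_right hU hl hr hsA rfl hu.1⟩
      · exact ⟨inv_addRight ⟨hrel, hl, hr⟩ hsB,
          mes_lt_right hU hl hr hsB rfl hu.2⟩
  | @impL x A B hb hu =>
      simp only [LSeq.BlackHappy] at hu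
      push_neg at hu
      have hx : (x, A.imp B) ∈ Labs ×ˢ F := hl hb
      have hA : A ∈ F := hcl _ hx.2 A (by simp [subf, mem_subf_self])
      have hB : B ∈ F := hcl _ hx.2 B (by simp [subf, mem_subf_self])
      have hsA : ({(x,A)} : Set (ℕ × Formula)) ⊆ Labs ×ˢ F := by
        rintro p rfl; exact ⟨hx.1, hA⟩
      have hsB : ({(x,B)} : Set (ℕ × Formula)) ⊆ Labs ×ˢ F := by
        rintro p rfl; exact ⟨hx.1, hB⟩
      refine ⟨⟨_, Or.inl rfl⟩, ⟨_, _, Set.Subset.refl _⟩, ?_⟩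
      rintro H (rfl | rfl)
      · exact ⟨inv_addRight ⟨hrel, hl, hr⟩ hsA,
          mes_lt_right hU hl hr hsA rfl hu.1⟩
      · exact ⟨inv_addLeft ⟨hrel, hl, hr⟩ hsB,
          mes_lt_left hU hl hr hsB rfl hu.2⟩

end SStepAux

/-- **Lemma 7.2(b).** The semi-saturation rewrite relation `⇝s`
is terminating on finite sets of labelled sequents: there is no infinite
sequence `S0 ⇝s S1 ⇝s S2 ⇝s ⋯` starting from a finite set `S0` (of finite
labelled sequents). -/
theorem sstep_terminating :
    ¬ ∃ f : ℕ → Set LSeq,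
        ((f 0).Finite ∧ ∀ G ∈ f 0, G.FiniteSeq) ∧
        ∀ n, SStep (f n) (f (n + 1)) := by
  classical
  rintro ⟨f, ⟨hfin0, hfs0⟩, hstep⟩
  set Labs : Set ℕ :=
    ⋃ G ∈ f 0, ((Prod.fst '' G.rel) ∪ (Prod.snd '' G.rel) ∪
      (Prod.fst '' G.left) ∪ (Prod.fst '' G.right)) with hLabsdef
  set F : Set Formula :=
    ⋃ G ∈ f 0, ⋃ A ∈ (Prod.snd '' G.left ∪ Prod.snd '' G.right),
      (SStepAux.subf A : Set Formula) with hFdef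
  have hLabsF : Labs.Finite := by
    apply hfin0.biUnion
    intro G hG
    obtain ⟨h1, h2, h3, h4⟩ := hfs0 G hG
    exact (((h2.image _).union (h2.image _)).union (h3.image _)).union (h4.image _)
  have hFF : F.Finite := by
    apply hfin0.biUnion
    intro G hG
    obtain ⟨h1, h2, h3, h4⟩ := hfs0 G hG
    exact Set.Finite.biUnion ((h3.image _).union (h4.image _))
      (fun A _ => (SStepAux.subf A).finite_toSet)
  have hU : (Labs ×ˢ F).Finite := hLabsF.prod hFF
  have hcl : ∀ C ∈ F, ∀ C' ∈ SStepAux.subf C, C' ∈ F := by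
    intro C hC C' hC'
    simp only [hFdef, Set.mem_iUnion, Finset.mem_coe, Set.mem_union] at hC ⊢
    obtain ⟨G, hG, A, hA, hCA⟩ := hC
    exact ⟨G, hG, A, hA, SStepAux.subf_trans A C hCA hC'⟩
  have hinv : ∀ n, (f n).Finite ∧ ∀ G ∈ f n, SStepAux.Inv Labs F G := by
    intro n
    induction n with
    | zero =>
        refine ⟨hfin0, fun G hG => ?_⟩
        refine ⟨?_, ?_, ?_⟩
        · rintro ⟨a, b⟩ hab
          refine ⟨Set.mem_biUnion hG ?_, Set.mem_biUnion hG ?_⟩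
          · exact Or.inl (Or.inl (Or.inl ⟨(a, b), hab, rfl⟩))
          · exact Or.inl (Or.inl (Or.inr ⟨(a, b), hab, rfl⟩))
        · rintro ⟨a, A⟩ hab
          refine ⟨Set.mem_biUnion hG ?_, ?_⟩
          · exact Or.inl (Or.inr ⟨(a, A), hab, rfl⟩)
          · simp only [hFdef, Set.mem_iUnion, Finset.mem_coe]
            exact ⟨G, hG, A, Or.inl ⟨(a, A), hab, rfl⟩, SStepAux.mem_subf_self A⟩
        · rintro ⟨a, A⟩ hab
          refine ⟨Set.mem_biUnion hG ?_, ?_⟩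
          · exact Or.inr ⟨(a, A), hab, rfl⟩
          · simp only [hFdef, Set.mem_iUnion, Finset.mem_coe]
            exact ⟨G, hG, A, Or.inr ⟨(a, A), hab, rfl⟩, SStepAux.mem_subf_self A⟩
    | succ n ih =>
        obtain ⟨G, hG, T, hT, heq⟩ := hstep n
        obtain ⟨hne, ⟨H1, H2, hsub⟩, hkey⟩ := SStepAux.key hU hcl hT (ih.2 G hG)
        have hTfin : T.Finite := ((Set.finite_singleton _).insert _).subset hsub
        refine ⟨by rw [heq]; exact (ih.1.diff).union hTfin, ?_⟩
        intro H hH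
        rw [heq] at hH
        rcases hH with hH | hH
        · exact ih.2 H hH.1
        · exact (hkey H hH).1
  have hdec : ∀ n,
      (∑ G ∈ (hinv (n+1)).1.toFinset, 3 ^ SStepAux.mes (Labs ×ˢ F) G) <
      (∑ G ∈ (hinv n).1.toFinset, 3 ^ SStepAux.mes (Labs ×ˢ F) G) := by
    intro n
    obtain ⟨G, hG, T, hT, heq⟩ := hstep n
    obtain ⟨⟨H0, hH0⟩, ⟨H1, H2, hsub⟩, hkey⟩ := SStepAux.key hU hcl hT ((hinv n).2 G hG)
    have hTfin : T.Finite := ((Set.finite_singleton _).insert _).subset hsub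
    set d : LSeq → ℕ := SStepAux.mes (Labs ×ˢ F) with hd
    have hdG1 : 1 ≤ d G := lt_of_le_of_lt (Nat.zero_le _) (hkey H0 hH0).2
    have hfeq : (hinv (n+1)).1.toFinset = ((hinv n).1.toFinset.erase G) ∪ hTfin.toFinset := by
      apply Finset.coe_injective
      simp only [Set.Finite.coe_toFinset, Finset.coe_union, Finset.coe_erase,
        Set.Finite.coe_toFinset, heq]
    have hGmem : G ∈ (hinv n).1.toFinset := (Set.Finite.mem_toFinset _).mpr hG
    have hsum1 : 3 ^ d G + ∑ H ∈ (hinv n).1.toFinset.erase G, 3 ^ d H =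
        ∑ H ∈ (hinv n).1.toFinset, 3 ^ d H :=
      Finset.add_sum_erase _ (fun H => 3 ^ d H) hGmem
    have hunion : (∑ H ∈ ((hinv n).1.toFinset.erase G) ∪ hTfin.toFinset, 3 ^ d H) +
        (∑ H ∈ ((hinv n).1.toFinset.erase G) ∩ hTfin.toFinset, 3 ^ d H) =
        (∑ H ∈ (hinv n).1.toFinset.erase G, 3 ^ d H) + ∑ H ∈ hTfin.toFinset, 3 ^ d H :=
      Finset.sum_union_inter
    have hcard : hTfin.toFinset.card ≤ 2 := by
      have hsub' : hTfin.toFinset ⊆ {H1, H2} := by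
        intro H hH
        have := hsub ((Set.Finite.mem_toFinset _).mp hH)
        simpa using this
      exact le_trans (Finset.card_le_card hsub')
        (le_trans (Finset.card_insert_le _ _) (by simp))
    have hTbound : (∑ H ∈ hTfin.toFinset, 3 ^ d H) ≤ 2 * 3 ^ (d G - 1) := by
      calc (∑ H ∈ hTfin.toFinset, 3 ^ d H)
          ≤ ∑ _H ∈ hTfin.toFinset, 3 ^ (d G - 1) := by
            apply Finset.sum_le_sum
            intro H hH
            have := (hkey H ((Set.Finite.mem_toFinset _).mp hH)).2
            exact Nat.pow_le_pow_right (by norm_num) (by omega)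
        _ = hTfin.toFinset.card * 3 ^ (d G - 1) := by
            rw [Finset.sum_const, smul_eq_mul]
        _ ≤ 2 * 3 ^ (d G - 1) := Nat.mul_le_mul_right _ hcard
    have hpow : 2 * 3 ^ (d G - 1) < 3 ^ d G := by
      have h3 : 3 ^ d G = 3 * 3 ^ (d G - 1) := by
        conv_lhs => rw [show d G = (d G - 1) + 1 by omega]
        rw [pow_succ]
        ring
      have hpos : 0 < 3 ^ (d G - 1) := Nat.pow_pos (by norm_num)
      omega
    rw [hfeq]
    omega
  have hmono : ∀ n, (∑ G ∈ (hinv n).1.toFinset, 3 ^ SStepAux.mes (Labs ×ˢ F) G) + n ≤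
      (∑ G ∈ (hinv 0).1.toFinset, 3 ^ SStepAux.mes (Labs ×ˢ F) G) := by
    intro n
    induction n with
    | zero => simp
    | succ k ih =>
        have := hdec k
        omega
  have := hmono ((∑ G ∈ (hinv 0).1.toFinset, 3 ^ SStepAux.mes (Labs ×ˢ F) G) + 1)
  omega
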